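/- arXiv:2406.11453 — 4 statements merged into one kernel-verified Lean document; each statement's English description precedes it below -/
import Mathlib

section
/- Let X be a d×d self-adjoint random matrix such that E[(X − E X)²] = I and such that E X has rank r. Then Λ(X) ≤ B(λ_max(E X)) + 2 σ*(X) √r. -/
/-!
Let `A = E X`, let `P` be the orthogonal projection onto the range of `A` (rank `r`) and let
`θ = max (λ_max A) 1`. Test Lehner's formula with `M = θ⁻¹ + t P`, `t > 0`. For a unit vector `v`
with `p = ⟨v, P v⟩` one has `⟨v, A v⟩ ≤ θ p` and `⟨v, M⁻¹ v⟩ = θ (1 - p) + (θ⁻¹ + t)⁻¹ p`.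
Isotropy `E[(X - A)²] = 1` turns the `θ⁻¹` part of `M` into `θ⁻¹` in
`⟨v, E[(X - A) M (X - A)] v⟩`, and writing `P = ∑_{i ≤ r} uᵢ uᵢ*` with unit `uᵢ`, each
`E |⟨uᵢ, (X - A) v⟩|² ≤ σ*²`. Hence `Λ(X) ≤ θ + θ⁻¹ + t⁻¹ + t r σ*²` for every `t > 0`, where
`θ + θ⁻¹ = B(λ_max A)`; the choice `t = (σ* √r)⁻¹` gives the bound.
-/

open MeasureTheory ProbabilityTheory Matrix
open scoped ComplexOrder

noncomputable section

/-- squared ℓ² norm of a complex vector -/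
def nsq {d : ℕ} (v : Fin d → ℂ) : ℝ := ∑ i, ‖v i‖ ^ 2

/-- Rayleigh quotient (real part) ⟨v, M v⟩ of a matrix at a vector -/
def ray {d : ℕ} (M : Matrix (Fin d) (Fin d) ℂ) (v : Fin d → ℂ) : ℝ :=
  (star v ⬝ᵥ M.mulVec v).re

/-- largest eigenvalue of a Hermitian matrix, characterized as the supremum of the
Rayleigh quotient over ℓ²-unit vectors -/
def lmax {d : ℕ} (M : Matrix (Fin d) (Fin d) ℂ) : ℝ := sSup {x | ∃ v, nsq v = 1 ∧ x = ray M v}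

/-- ℓ²→ℓ² operator (spectral) norm of a matrix -/
def opN {d : ℕ} (M : Matrix (Fin d) (Fin d) ℂ) : ℝ :=
  sSup {x | ∃ v, nsq v = 1 ∧ x = Real.sqrt (nsq (M.mulVec v))}

/-- entrywise expectation of a random matrix -/
def Emat {Ω : Type*} [MeasurableSpace Ω] {d : ℕ} (μ : Measure Ω)
    (X : Ω → Matrix (Fin d) (Fin d) ℂ) : Matrix (Fin d) (Fin d) ℂ :=
  Matrix.of fun i j => ∫ ω, X ω i j ∂μ

/-- the quadratic map M ↦ E[(X - E X) M (X - E X)] -/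
def qmap {Ω : Type*} [MeasurableSpace Ω] {d : ℕ} (μ : Measure Ω)
    (X : Ω → Matrix (Fin d) (Fin d) ℂ) (M : Matrix (Fin d) (Fin d) ℂ) :
    Matrix (Fin d) (Fin d) ℂ :=
  Emat μ fun ω => (X ω - Emat μ X) * M * (X ω - Emat μ X)

/-- σ*(X)² = sup_{‖v‖=‖w‖=1} E |⟨v, (X - E X) w⟩|² -/
def sigmaStarSq {Ω : Type*} [MeasurableSpace Ω] {d : ℕ} (μ : Measure Ω)
    (X : Ω → Matrix (Fin d) (Fin d) ℂ) : ℝ :=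
  sSup {x | ∃ v w : Fin d → ℂ, nsq v = 1 ∧ nsq w = 1 ∧
    x = ∫ ω, ‖star v ⬝ᵥ (X ω - Emat μ X).mulVec w‖ ^ 2 ∂μ}

/-- σ*(X) -/
def sigmaStar {Ω : Type*} [MeasurableSpace Ω] {d : ℕ} (μ : Measure Ω)
    (X : Ω → Matrix (Fin d) (Fin d) ℂ) : ℝ :=
  Real.sqrt (sigmaStarSq μ X)

/-- Lehner's variational quantity
Λ(X) = inf_{M > 0} λ_max(E X + M⁻¹ + E[(X - E X) M (X - E X)]),
the infimum being over positive definite Hermitian matrices M; by Lehner's formula this equals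
the upper spectral edge λ_max(X_free) of the associated free operator. -/
def Lehner {Ω : Type*} [MeasurableSpace Ω] {d : ℕ} (μ : Measure Ω)
    (X : Ω → Matrix (Fin d) (Fin d) ℂ) : ℝ :=
  sInf {x | ∃ M : Matrix (Fin d) (Fin d) ℂ, M.PosDef ∧
    x = lmax (Emat μ X + M⁻¹ + qmap μ X M)}

/-- B(θ) = 2 for θ ≤ 1 and θ + 1/θ for θ > 1 -/
def Bfun (θ : ℝ) : ℝ := if θ ≤ 1 then 2 else θ + θ⁻¹

section Rayleigh

variable {d : ℕ}

lemma nsq_eq_norm_sq (v : Fin d → ℂ) : nsq v = ‖WithLp.toLp 2 v‖ ^ 2 := by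
  rw [EuclideanSpace.norm_eq, Real.sq_sqrt (by positivity)]; rfl

lemma star_dotProduct_self_eq_nsq (v : Fin d → ℂ) : star v ⬝ᵥ v = (nsq v : ℂ) := by
  simp only [dotProduct, nsq, Pi.star_apply, Complex.star_def, RCLike.conj_mul]
  push_cast; rfl

lemma ray_add (B C : Matrix (Fin d) (Fin d) ℂ) (v : Fin d → ℂ) :
    ray (B + C) v = ray B v + ray C v := by
  simp [ray, add_mulVec, dotProduct_add]

lemma ray_one (v : Fin d → ℂ) : ray 1 v = nsq v := by
  rw [ray, one_mulVec, star_dotProduct_self_eq_nsq, Complex.ofReal_re]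

lemma ray_mul_mul_of_isHermitian {Z : Matrix (Fin d) (Fin d) ℂ} (hZ : Z.IsHermitian)
    (B : Matrix (Fin d) (Fin d) ℂ) (v : Fin d → ℂ) : ray (Z * B * Z) v = ray B (Z *ᵥ v) := by
  rw [ray, ray, star_mulVec, hZ.eq, ← mulVec_mulVec, ← mulVec_mulVec, dotProduct_mulVec]

lemma norm_star_dotProduct_sq_le (a y : Fin d → ℂ) : ‖star a ⬝ᵥ y‖ ^ 2 ≤ nsq a * nsq y := by
  have h := norm_inner_le_norm (𝕜 := ℂ) (WithLp.toLp 2 a) (WithLp.toLp 2 y)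
  rw [EuclideanSpace.inner_eq_star_dotProduct, dotProduct_comm] at h
  rw [nsq_eq_norm_sq, nsq_eq_norm_sq, ← mul_pow]
  exact pow_le_pow_left₀ (norm_nonneg _) h 2

lemma bddAbove_ray (B : Matrix (Fin d) (Fin d) ℂ) :
    BddAbove {x | ∃ v, nsq v = 1 ∧ x = ray B v} := by
  refine ⟨∑ i, ∑ j, ‖B i j‖, ?_⟩
  rintro _ ⟨v, hv, rfl⟩
  have hv_le : ∀ i, ‖v i‖ ≤ 1 := fun i => by
    have : ‖v i‖ ^ 2 ≤ 1 := hv ▸ Finset.single_le_sum (f := fun j => ‖v j‖ ^ 2)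
      (fun j _ => by positivity) (Finset.mem_univ i)
    nlinarith [norm_nonneg (v i)]
  calc ray B v ≤ ‖star v ⬝ᵥ B *ᵥ v‖ := Complex.re_le_norm _
    _ ≤ ∑ i, ∑ j, ‖star (v i) * (B i j * v j)‖ := by
      simp only [dotProduct, mulVec, Finset.mul_sum]
      exact (norm_sum_le _ _).trans (Finset.sum_le_sum fun i _ => norm_sum_le _ _)
    _ ≤ ∑ i, ∑ j, ‖B i j‖ := by
      gcongr with i _ j _
      rw [norm_mul, norm_mul, norm_star]
      calc ‖v i‖ * (‖B i j‖ * ‖v j‖) ≤ 1 * (‖B i j‖ * 1) := by gcongr <;> exact hv_le _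
        _ = ‖B i j‖ := by ring

lemma ray_le_lmax (B : Matrix (Fin d) (Fin d) ℂ) {v : Fin d → ℂ} (hv : nsq v = 1) :
    ray B v ≤ lmax B :=
  le_csSup (bddAbove_ray B) ⟨v, hv, rfl⟩

lemma lmax_le {B : Matrix (Fin d) (Fin d) ℂ} {C : ℝ} (hC : 0 ≤ C)
    (h : ∀ v, nsq v = 1 → ray B v ≤ C) : lmax B ≤ C :=
  Real.sSup_le (by rintro _ ⟨v, hv, rfl⟩; exact h v hv) hC

end Rayleigh

section Spectral

variable {d : ℕ}

def conjDiagonal (U : unitaryGroup (Fin d) ℂ) (f : Fin d → ℝ) : Matrix (Fin d) (Fin d) ℂ :=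
  Unitary.conjStarAlgAut ℂ _ U (diagonal (RCLike.ofReal ∘ f))

variable (U : unitaryGroup (Fin d) ℂ)

lemma ray_conjDiagonal (f : Fin d → ℝ) (v : Fin d → ℂ) :
    ray (conjDiagonal U f) v = ∑ i, f i * ‖(star (U : Matrix (Fin d) (Fin d) ℂ) *ᵥ v) i‖ ^ 2 := by
  have hU : star v ᵥ* (U : Matrix (Fin d) (Fin d) ℂ) = star (star (U : Matrix _ _ ℂ) *ᵥ v) := by
    rw [star_mulVec, ← star_eq_conjTranspose, star_star]
  rw [conjDiagonal, Unitary.conjStarAlgAut_apply, ray, ← mulVec_mulVec, ← mulVec_mulVec,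
    dotProduct_mulVec, hU]
  simp only [dotProduct, mulVec_diagonal, Function.comp_apply, Pi.star_apply, Complex.star_def,
    Complex.re_sum]
  refine Finset.sum_congr rfl fun i _ => ?_
  rw [mul_left_comm, RCLike.conj_mul]
  norm_cast

lemma conjDiagonal_one : conjDiagonal U 1 = 1 := by
  simp [conjDiagonal]

lemma nsq_star_mulVec (v : Fin d → ℂ) :
    nsq (star (U : Matrix (Fin d) (Fin d) ℂ) *ᵥ v) = nsq v := by
  simpa [conjDiagonal_one, ray_one, nsq] using (ray_conjDiagonal U 1 v).symm

lemma star_mulVec_apply (y : Fin d → ℂ) (i : Fin d) :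
    (star (U : Matrix (Fin d) (Fin d) ℂ) *ᵥ y) i = star ((U : Matrix (Fin d) (Fin d) ℂ)ᵀ i) ⬝ᵥ y := by
  simp [mulVec, dotProduct, Matrix.star_apply]

lemma nsq_transpose_apply (i : Fin d) : nsq ((U : Matrix (Fin d) (Fin d) ℂ)ᵀ i) = 1 := by
  have h := congr_fun (congr_fun (UnitaryGroup.star_mul_self U) i) i
  rw [mul_apply, one_apply_eq] at h
  exact_mod_cast (star_dotProduct_self_eq_nsq _).symm.trans h

lemma sum_norm_sq_star_mulVec_le (S : Finset (Fin d)) (v : Fin d → ℂ) :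
    ∑ i ∈ S, ‖(star (U : Matrix (Fin d) (Fin d) ℂ) *ᵥ v) i‖ ^ 2 ≤ nsq v := by
  rw [← nsq_star_mulVec U v]
  exact Finset.sum_le_sum_of_subset_of_nonneg S.subset_univ fun i _ _ => by positivity

lemma conjDiagonal_mul (f g : Fin d → ℝ) :
    conjDiagonal U f * conjDiagonal U g = conjDiagonal U (f * g) := by
  simp only [conjDiagonal, ← map_mul, diagonal_mul_diagonal]
  congr; ext i; simp

lemma inv_conjDiagonal {f : Fin d → ℝ} (hf : ∀ i, f i ≠ 0) :
    (conjDiagonal U f)⁻¹ = conjDiagonal U f⁻¹ := by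
  refine inv_eq_right_inv ?_
  rw [conjDiagonal_mul, ← conjDiagonal_one U]
  congr; ext i; simp [hf i]

lemma posDef_conjDiagonal {f : Fin d → ℝ} (hf : ∀ i, 0 < f i) : (conjDiagonal U f).PosDef := by
  rw [conjDiagonal, Unitary.conjStarAlgAut_apply, star_eq_conjTranspose]
  refine (posDef_diagonal_iff.2 fun i => ?_).mul_mul_conjTranspose_same
    (vecMul_injective_iff_isUnit.2 ?_)
  · simpa using hf i
  · exact (Unitary.toUnits U).isUnit

lemma ray_conjDiagonal_ite (S : Finset (Fin d)) (a b : ℝ) (v : Fin d → ℂ) :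
    ray (conjDiagonal U fun i => if i ∈ S then a else b) v
      = b * nsq v + (a - b) * ∑ i ∈ S, ‖(star (U : Matrix (Fin d) (Fin d) ℂ) *ᵥ v) i‖ ^ 2 := by
  have hsplit : ∀ (i : Fin d) (x : ℝ),
      (if i ∈ S then a else b) * x = b * x + if i ∈ S then (a - b) * x else 0 := by
    intro i x; split_ifs <;> ring
  rw [← nsq_star_mulVec U v, nsq]
  simp only [ray_conjDiagonal, hsplit, Finset.sum_add_distrib, Finset.sum_ite_mem,
    Finset.univ_inter, ← Finset.mul_sum]

end Spectral

namespace Matrix.IsHermitian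

variable {d : ℕ} {A : Matrix (Fin d) (Fin d) ℂ} (hA : A.IsHermitian)

lemma eq_conjDiagonal : A = conjDiagonal hA.eigenvectorUnitary hA.eigenvalues :=
  hA.spectral_theorem

lemma eigenvalues_le_lmax (i : Fin d) : hA.eigenvalues i ≤ lmax A := by
  refine hA.eigenvalues_eq i ▸ ray_le_lmax A ?_
  rw [nsq_eq_norm_sq, WithLp.toLp_ofLp, hA.eigenvectorBasis.orthonormal.1 i, one_pow]

lemma ray_le_mul_sum_nonzero {c : ℝ} (hc : ∀ i, hA.eigenvalues i ≤ c) (v : Fin d → ℂ) :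
    ray A v ≤ c * ∑ i with hA.eigenvalues i ≠ 0,
      ‖(star (hA.eigenvectorUnitary : Matrix (Fin d) (Fin d) ℂ) *ᵥ v) i‖ ^ 2 := by
  conv_lhs => rw [hA.eq_conjDiagonal]
  rw [ray_conjDiagonal, Finset.mul_sum,
    ← Finset.sum_filter_of_ne fun i _ h => left_ne_zero_of_mul h]
  gcongr with i
  exact hc i

end Matrix.IsHermitian

section Expectation

variable {Ω : Type*} [MeasurableSpace Ω] {μ : Measure Ω} {d : ℕ}

lemma star_dotProduct_mulVec_eq_sum (B : Matrix (Fin d) (Fin d) ℂ) (a b : Fin d → ℂ) :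
    star a ⬝ᵥ B *ᵥ b = ∑ i, ∑ j, star (a i) * b j * B i j := by
  simp only [dotProduct, mulVec, Finset.mul_sum, Pi.star_apply]
  exact Finset.sum_congr rfl fun i _ => Finset.sum_congr rfl fun j _ => by ring

lemma memLp_star_dotProduct_mulVec {p : ENNReal} {F : Ω → Matrix (Fin d) (Fin d) ℂ}
    (hF : ∀ i j, MemLp (fun ω => F ω i j) p μ) (a b : Fin d → ℂ) :
    MemLp (fun ω => star a ⬝ᵥ F ω *ᵥ b) p μ := by
  simp only [star_dotProduct_mulVec_eq_sum]
  exact memLp_finsetSum _ fun i _ => memLp_finsetSum _ fun j _ => (hF i j).const_mul _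

lemma star_dotProduct_Emat_mulVec {F : Ω → Matrix (Fin d) (Fin d) ℂ}
    (hF : ∀ i j, Integrable (fun ω => F ω i j) μ) (a b : Fin d → ℂ) :
    star a ⬝ᵥ Emat μ F *ᵥ b = ∫ ω, star a ⬝ᵥ F ω *ᵥ b ∂μ := by
  simp only [star_dotProduct_mulVec_eq_sum]
  rw [integral_finsetSum _ fun i _ => integrable_finsetSum _ fun j _ => (hF i j).const_mul _]
  refine Finset.sum_congr rfl fun i _ => ?_
  rw [integral_finsetSum _ fun j _ => (hF i j).const_mul _]
  exact Finset.sum_congr rfl fun j _ => (integral_const_mul _ _).symm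

lemma integrable_star_dotProduct_mulVec {F : Ω → Matrix (Fin d) (Fin d) ℂ}
    (hF : ∀ i j, Integrable (fun ω => F ω i j) μ) (a b : Fin d → ℂ) :
    Integrable (fun ω => star a ⬝ᵥ F ω *ᵥ b) μ :=
  memLp_one_iff_integrable.1 <|
    memLp_star_dotProduct_mulVec (fun i j => memLp_one_iff_integrable.2 (hF i j)) a b

lemma integrable_ray {F : Ω → Matrix (Fin d) (Fin d) ℂ}
    (hF : ∀ i j, Integrable (fun ω => F ω i j) μ) (v : Fin d → ℂ) :
    Integrable (fun ω => ray (F ω) v) μ :=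
  (integrable_star_dotProduct_mulVec hF v v).re

lemma ray_Emat {F : Ω → Matrix (Fin d) (Fin d) ℂ}
    (hF : ∀ i j, Integrable (fun ω => F ω i j) μ) (v : Fin d → ℂ) :
    ray (Emat μ F) v = ∫ ω, ray (F ω) v ∂μ := by
  rw [ray, star_dotProduct_Emat_mulVec hF, ← RCLike.re_to_complex,
    ← integral_re (integrable_star_dotProduct_mulVec hF v v)]
  rfl

variable {X : Ω → Matrix (Fin d) (Fin d) ℂ}

lemma isHermitian_Emat (hherm : ∀ ω, (X ω).IsHermitian) : (Emat μ X).IsHermitian := by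
  ext i j
  simp only [conjTranspose_apply, Emat, of_apply, Complex.star_def, ← integral_conj]
  exact integral_congr_ae (Filter.Eventually.of_forall fun ω => (hherm ω).apply i j)

lemma memLp_sub_Emat [IsFiniteMeasure μ] (hL2 : ∀ i j, MemLp (fun ω => X ω i j) 2 μ) (i j : Fin d) :
    MemLp (fun ω => (X ω - Emat μ X) i j) 2 μ :=
  (hL2 i j).sub (memLp_const _)

lemma integrable_sub_Emat_mul_mul [IsFiniteMeasure μ] (hL2 : ∀ i j, MemLp (fun ω => X ω i j) 2 μ)
    (C : Matrix (Fin d) (Fin d) ℂ) (i j : Fin d) :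
    Integrable (fun ω => ((X ω - Emat μ X) * C * (X ω - Emat μ X)) i j) μ := by
  simp only [mul_apply, Finset.sum_mul]
  exact integrable_finsetSum _ fun k _ => integrable_finsetSum _ fun l _ =>
    (((memLp_sub_Emat hL2 i l).const_mul (C l k)).integrable_mul (memLp_sub_Emat hL2 k j)).congr
      (Filter.Eventually.of_forall fun ω => by simp only [Pi.mul_apply]; ring)

end Expectation

section Centered

variable {Ω : Type*} [MeasurableSpace Ω] {μ : Measure Ω} [IsFiniteMeasure μ] {d : ℕ}
  {X : Ω → Matrix (Fin d) (Fin d) ℂ}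

lemma ray_qmap (hherm : ∀ ω, (X ω).IsHermitian) (hL2 : ∀ i j, MemLp (fun ω => X ω i j) 2 μ)
    (M : Matrix (Fin d) (Fin d) ℂ) (v : Fin d → ℂ) :
    ray (qmap μ X M) v = ∫ ω, ray M ((X ω - Emat μ X) *ᵥ v) ∂μ := by
  rw [qmap, ray_Emat (integrable_sub_Emat_mul_mul hL2 M)]
  exact integral_congr_ae (Filter.Eventually.of_forall fun ω =>
    ray_mul_mul_of_isHermitian ((hherm ω).sub (isHermitian_Emat hherm)) M v)

lemma integrable_nsq_sub_Emat_mulVec (hherm : ∀ ω, (X ω).IsHermitian)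
    (hL2 : ∀ i j, MemLp (fun ω => X ω i j) 2 μ) (v : Fin d → ℂ) :
    Integrable (fun ω => nsq ((X ω - Emat μ X) *ᵥ v)) μ := by
  refine (integrable_ray (integrable_sub_Emat_mul_mul hL2 1) v).congr
    (Filter.Eventually.of_forall fun ω => ?_)
  dsimp only
  rw [ray_mul_mul_of_isHermitian ((hherm ω).sub (isHermitian_Emat hherm)), ray_one]

lemma integral_nsq_sub_Emat_mulVec (hherm : ∀ ω, (X ω).IsHermitian)
    (hL2 : ∀ i j, MemLp (fun ω => X ω i j) 2 μ)
    (hiso : Emat μ (fun ω => (X ω - Emat μ X) * (X ω - Emat μ X)) = 1) (v : Fin d → ℂ) :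
    ∫ ω, nsq ((X ω - Emat μ X) *ᵥ v) ∂μ = nsq v := by
  have hq : qmap μ X 1 = 1 := by simpa only [qmap, mul_one] using hiso
  simpa only [hq, ray_one] using (ray_qmap hherm hL2 1 v).symm

lemma integrable_norm_sq_star_dotProduct_sub_Emat_mulVec
    (hL2 : ∀ i j, MemLp (fun ω => X ω i j) 2 μ) (a b : Fin d → ℂ) :
    Integrable (fun ω => ‖star a ⬝ᵥ (X ω - Emat μ X) *ᵥ b‖ ^ 2) μ :=
  have h := memLp_star_dotProduct_mulVec (memLp_sub_Emat hL2) a b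
  (memLp_two_iff_integrable_sq_norm h.1).1 h

lemma integral_norm_sq_le_sigmaStarSq (hherm : ∀ ω, (X ω).IsHermitian)
    (hL2 : ∀ i j, MemLp (fun ω => X ω i j) 2 μ)
    (hiso : Emat μ (fun ω => (X ω - Emat μ X) * (X ω - Emat μ X)) = 1)
    {a b : Fin d → ℂ} (ha : nsq a = 1) (hb : nsq b = 1) :
    ∫ ω, ‖star a ⬝ᵥ (X ω - Emat μ X) *ᵥ b‖ ^ 2 ∂μ ≤ sigmaStarSq μ X := by
  refine le_csSup ⟨1, ?_⟩ ⟨a, b, ha, hb, rfl⟩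
  rintro _ ⟨a, b, ha, hb, rfl⟩
  calc ∫ ω, ‖star a ⬝ᵥ (X ω - Emat μ X) *ᵥ b‖ ^ 2 ∂μ
      ≤ ∫ ω, nsq ((X ω - Emat μ X) *ᵥ b) ∂μ := by
        refine integral_mono_of_nonneg (Filter.Eventually.of_forall fun ω => by positivity)
          (integrable_nsq_sub_Emat_mulVec hherm hL2 b) (Filter.Eventually.of_forall fun ω => ?_)
        simpa only [ha, one_mul] using norm_star_dotProduct_sq_le a ((X ω - Emat μ X) *ᵥ b)
    _ = 1 := by rw [integral_nsq_sub_Emat_mulVec hherm hL2 hiso, hb]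

lemma ray_qmap_conjDiagonal_ite_le (hherm : ∀ ω, (X ω).IsHermitian)
    (hL2 : ∀ i j, MemLp (fun ω => X ω i j) 2 μ)
    (hiso : Emat μ (fun ω => (X ω - Emat μ X) * (X ω - Emat μ X)) = 1)
    (U : unitaryGroup (Fin d) ℂ) (S : Finset (Fin d)) {a b : ℝ} (hba : b ≤ a)
    {v : Fin d → ℂ} (hv : nsq v = 1) :
    ray (qmap μ X (conjDiagonal U fun i => if i ∈ S then a else b)) v
      ≤ b + (a - b) * (S.card * sigmaStarSq μ X) := by
  have hS := fun i (_ : i ∈ S) =>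
    integrable_norm_sq_star_dotProduct_sub_Emat_mulVec (μ := μ) hL2 ((U : Matrix _ _ ℂ)ᵀ i) v
  have hσ : ∑ i ∈ S, ∫ ω, ‖star ((U : Matrix _ _ ℂ)ᵀ i) ⬝ᵥ (X ω - Emat μ X) *ᵥ v‖ ^ 2 ∂μ
      ≤ S.card * sigmaStarSq μ X := by
    simpa using Finset.sum_le_card_nsmul S _ _ fun i _ =>
      integral_norm_sq_le_sigmaStarSq hherm hL2 hiso (nsq_transpose_apply U i) hv
  simp only [ray_qmap hherm hL2, ray_conjDiagonal_ite, star_mulVec_apply]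
  rw [integral_add ((integrable_nsq_sub_Emat_mulVec hherm hL2 v).const_mul _)
      ((integrable_finsetSum S hS).const_mul _), integral_const_mul, integral_const_mul,
    integral_nsq_sub_Emat_mulVec hherm hL2 hiso, hv, integral_finsetSum S hS, mul_one]
  gcongr

end Centered

lemma Lehner_le_of_ray_le {Ω : Type*} [MeasurableSpace Ω] {μ : Measure Ω} {d : ℕ}
    {X : Ω → Matrix (Fin d) (Fin d) ℂ} {M : Matrix (Fin d) (Fin d) ℂ} (hM : M.PosDef) {C : ℝ}
    (hC : 0 ≤ C) (h : ∀ v, nsq v = 1 → ray (Emat μ X + M⁻¹ + qmap μ X M) v ≤ C) :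
    Lehner μ X ≤ C := by
  by_cases hbdd : BddBelow {x | ∃ M : Matrix (Fin d) (Fin d) ℂ, M.PosDef ∧
      x = lmax (Emat μ X + M⁻¹ + qmap μ X M)}
  · exact (csInf_le hbdd ⟨M, hM, rfl⟩).trans (lmax_le hC h)
  · rw [Lehner, Real.sInf_of_not_bddBelow hbdd]
    exact hC

lemma Bfun_eq (θ : ℝ) : Bfun θ = max θ 1 + (max θ 1)⁻¹ := by
  unfold Bfun
  split_ifs with h
  · rw [max_eq_right h]; norm_num
  · rw [max_eq_left (not_le.1 h).le]

lemma sigmaStarSq_nonneg {Ω : Type*} [MeasurableSpace Ω] (μ : Measure Ω) {d : ℕ}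
    (X : Ω → Matrix (Fin d) (Fin d) ℂ) : 0 ≤ sigmaStarSq μ X :=
  Real.sSup_nonneg (by rintro _ ⟨a, b, -, -, rfl⟩; positivity)

lemma Lehner_le_Bfun_add {Ω : Type*} [MeasurableSpace Ω] {μ : Measure Ω} [IsFiniteMeasure μ]
    {d r : ℕ} {X : Ω → Matrix (Fin d) (Fin d) ℂ} (hherm : ∀ ω, (X ω).IsHermitian)
    (hL2 : ∀ i j, MemLp (fun ω => X ω i j) 2 μ)
    (hiso : Emat μ (fun ω => (X ω - Emat μ X) * (X ω - Emat μ X)) = 1)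
    (hrank : (Emat μ X).rank = r) {t : ℝ} (ht : 0 < t) :
    Lehner μ X ≤ Bfun (lmax (Emat μ X)) + t⁻¹ + t * (r * sigmaStarSq μ X) := by
  have hA := isHermitian_Emat (μ := μ) hherm
  set U := hA.eigenvectorUnitary
  set S := Finset.univ.filter fun i => hA.eigenvalues i ≠ 0
  have hcard : S.card = r := by
    rw [← hrank, hA.rank_eq_card_non_zero_eigs, Fintype.card_subtype]
  set θ := max (lmax (Emat μ X)) 1
  have hθ : 0 < θ := one_pos.trans_le (le_max_right _ _)
  set m : Fin d → ℝ := fun i => if i ∈ S then θ⁻¹ + t else θ⁻¹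
  have hm : ∀ i, 0 < m i := fun i => by simp only [m]; split_ifs <;> positivity
  have hC : 0 ≤ Bfun (lmax (Emat μ X)) + t⁻¹ + t * (r * sigmaStarSq μ X) := by
    have := sigmaStarSq_nonneg μ X
    rw [Bfun_eq]
    positivity
  refine Lehner_le_of_ray_le (posDef_conjDiagonal U hm) hC fun v hv => ?_
  set p := ∑ i ∈ S, ‖(star (U : Matrix (Fin d) (Fin d) ℂ) *ᵥ v) i‖ ^ 2
  have hp1 : p ≤ 1 := hv ▸ sum_norm_sq_star_mulVec_le U S v
  have hA_le : ray (Emat μ X) v ≤ θ * p :=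
    hA.ray_le_mul_sum_nonzero (fun i => (hA.eigenvalues_le_lmax i).trans (le_max_left _ _)) v
  have hMinv : ray (conjDiagonal U m)⁻¹ v = θ + ((θ⁻¹ + t)⁻¹ - θ) * p := by
    have hm_inv : m⁻¹ = fun i => if i ∈ S then (θ⁻¹ + t)⁻¹ else θ := by
      ext i; simp only [m, Pi.inv_apply]; split_ifs <;> simp
    rw [inv_conjDiagonal U fun i => (hm i).ne', hm_inv, ray_conjDiagonal_ite, hv, mul_one]
  have hQ : ray (qmap μ X (conjDiagonal U m)) v ≤ θ⁻¹ + t * (r * sigmaStarSq μ X) := by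
    simpa [← hcard] using ray_qmap_conjDiagonal_ite_le hherm hL2 hiso U S
      (by linarith : θ⁻¹ ≤ θ⁻¹ + t) hv
  have hinv : (θ⁻¹ + t)⁻¹ * p ≤ t⁻¹ :=
    calc (θ⁻¹ + t)⁻¹ * p ≤ (θ⁻¹ + t)⁻¹ * 1 := by gcongr
      _ ≤ t⁻¹ := by rw [mul_one]; gcongr; linarith [inv_pos.2 hθ]
  rw [ray_add, ray_add, Bfun_eq]
  linarith

lemma le_add_two_mul_sqrt_of_forall_le {L c a : ℝ} (ha : 0 ≤ a)
    (h : ∀ t : ℝ, 0 < t → L ≤ c + t⁻¹ + t * a) : L ≤ c + 2 * √a := by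
  rcases ha.eq_or_lt with rfl | ha
  · refine le_of_forall_pos_le_add fun ε hε => ?_
    simpa using h ε⁻¹ (inv_pos.2 hε)
  · have hs : 0 < √a := Real.sqrt_pos.2 ha
    have hsa : (√a)⁻¹ * a = √a := by
      rw [inv_mul_eq_div, div_eq_iff hs.ne', ← sq, Real.sq_sqrt ha.le]
    calc L ≤ c + (√a)⁻¹⁻¹ + (√a)⁻¹ * a := h _ (inv_pos.2 hs)
      _ = c + 2 * √a := by rw [inv_inv, hsa]; ring

/-- Lemma: isotropic BBP phase transition, upper bound.
If E[(X - E X)²] = 1 and E X has rank r, then Λ(X) ≤ B(λ_max(E X)) + 2 σ*(X) √r. -/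
theorem bbp_upper {Ω : Type*} [MeasurableSpace Ω] (μ : Measure Ω) [IsProbabilityMeasure μ]
    {d r : ℕ} (X : Ω → Matrix (Fin d) (Fin d) ℂ)
    (hherm : ∀ ω, (X ω).IsHermitian)
    (hL2 : ∀ i j, MemLp (fun ω => X ω i j) 2 μ)
    (hiso : Emat μ (fun ω => (X ω - Emat μ X) * (X ω - Emat μ X)) = 1)
    (hrank : (Emat μ X).rank = r) :
    Lehner μ X ≤ Bfun (lmax (Emat μ X)) + 2 * sigmaStar μ X * Real.sqrt r := by
  have hσ := sigmaStarSq_nonneg μ X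
  calc Lehner μ X ≤ Bfun (lmax (Emat μ X)) + 2 * √(r * sigmaStarSq μ X) :=
        le_add_two_mul_sqrt_of_forall_le (by positivity) fun t ht =>
          Lehner_le_Bfun_add hherm hL2 hiso hrank ht
    _ = _ := by rw [Real.sqrt_mul (Nat.cast_nonneg r), sigmaStar]; ring
end
end

section
/- Let B be a q×q symmetric irreducible matrix with nonnegative entries and let c ∈ ℝ^q have strictly positive entries. Let λ_cr := λ_max(diag(c)^{1/2} B diag(c)^{1/2}) and let b ∈ ℝ^q with strictly positive entries be the Perron–Frobenius eigenvector of B diag(c), i.e. B diag(c) b = λ_cr b. Then λ_∅ ≤ 1 − (min_i b_i / max_i b_i)·(1 − λ_cr^{1/2})². -/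
/-!
Test vectors of the form `v = 1 + t b` are the whole argument: since `v - 1` is then an
eigenvector of `A = B diag(c)` for `λ_cr = a²`, the diagonal matrix inside `λ_max` has entries
`1 / v_k + a² (v_k - 1)`. The choice `t = (1 - a) / (a max b)` bounds the `k`-th entry by
`1 - s_k (1 - a)²` with `s_k = b_k / max b ≥ min b / max b`. When `λ_cr = 0` the matrix `A`
vanishes and constant vectors `v` drive `λ_∅` down to `0`.
-/

open MeasureTheory ProbabilityTheory Matrix

noncomputable section

/-- squared ℓ² norm of a real vector -/
def nsqR {q : ℕ} (v : Fin q → ℝ) : ℝ := ∑ i, v i ^ 2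

/-- Rayleigh quotient ⟨v, M v⟩ of a real matrix at a vector -/
def rayR {q : ℕ} (M : Matrix (Fin q) (Fin q) ℝ) (v : Fin q → ℝ) : ℝ := v ⬝ᵥ M.mulVec v

/-- largest eigenvalue of a real symmetric matrix, characterized as the supremum of the
Rayleigh quotient over ℓ²-unit vectors -/
def lmaxR {q : ℕ} (M : Matrix (Fin q) (Fin q) ℝ) : ℝ :=
  sSup {x | ∃ v, nsqR v = 1 ∧ x = rayR M v}

/-- the quantity λ = inf_{v > 0} max{λ_max(diag(c)^{1/2} B diag(c)^{1/2} +
diag(B diag(c)(v - 1))), λ_max(diag(v)⁻¹ + diag(B diag(c)(v - 1)))} -/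
def lamVal {q : ℕ} (B : Matrix (Fin q) (Fin q) ℝ) (c : Fin q → ℝ) : ℝ :=
  sInf {x | ∃ v : Fin q → ℝ, (∀ k, 0 < v k) ∧
    x = max
      (lmaxR (Matrix.diagonal (fun k => Real.sqrt (c k)) * B *
          Matrix.diagonal (fun k => Real.sqrt (c k)) +
        Matrix.diagonal ((B * Matrix.diagonal c).mulVec (v - 1))))
      (lmaxR (Matrix.diagonal (fun k => (v k)⁻¹) +
        Matrix.diagonal ((B * Matrix.diagonal c).mulVec (v - 1))))}

/-- the quantity λ_∅ = inf_{v > 0} λ_max(diag(v)⁻¹ + diag(B diag(c)(v - 1))) -/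
def lamNull {q : ℕ} (B : Matrix (Fin q) (Fin q) ℝ) (c : Fin q → ℝ) : ℝ :=
  sInf {x | ∃ v : Fin q → ℝ, (∀ k, 0 < v k) ∧
    x = lmaxR (Matrix.diagonal (fun k => (v k)⁻¹) +
      Matrix.diagonal ((B * Matrix.diagonal c).mulVec (v - 1)))}

/-- a nonnegative matrix is irreducible if for all i, j some power has a strictly
positive (i,j) entry (equivalently, the associated directed graph is strongly connected) -/
def IrreducibleMat {q : ℕ} (B : Matrix (Fin q) (Fin q) ℝ) : Prop :=
  ∀ i j, ∃ n : ℕ, 0 < (B ^ n) i j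

namespace Matrix

variable {q : ℕ}

lemma nsqR_single (k : Fin q) : nsqR (Pi.single k 1 : Fin q → ℝ) = 1 := by
  simp [nsqR, Pi.single_apply]

lemma rayR_diagonal (d v : Fin q → ℝ) :
    rayR (diagonal d) v = ∑ i, d i * v i ^ 2 := by
  simp only [rayR, dotProduct, mulVec_diagonal]
  exact Finset.sum_congr rfl fun i _ => by ring

lemma rayR_diagonal_single (d : Fin q → ℝ) (k : Fin q) :
    rayR (diagonal d) (Pi.single k 1) = d k := by
  simp [rayR_diagonal, Pi.single_apply]

lemma lmaxR_diagonal_le [NeZero q] {d : Fin q → ℝ} {t : ℝ} (h : ∀ k, d k ≤ t) :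
    lmaxR (diagonal d) ≤ t := by
  refine csSup_le ⟨d 0, Pi.single 0 1, nsqR_single _, (rayR_diagonal_single _ _).symm⟩ ?_
  rintro x ⟨v, hv, rfl⟩
  calc rayR (diagonal d) v = ∑ i, d i * v i ^ 2 := rayR_diagonal d v
    _ ≤ ∑ i, t * v i ^ 2 := by gcongr with i; exact h i
    _ = t := by rw [← Finset.mul_sum, ← nsqR, hv, mul_one]

lemma le_lmaxR_diagonal (d : Fin q → ℝ) (k : Fin q) : d k ≤ lmaxR (diagonal d) := by
  refine le_csSup ⟨∑ i, |d i|, ?_⟩ ⟨Pi.single k 1, nsqR_single _, (rayR_diagonal_single _ _).symm⟩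
  rintro x ⟨v, hv, rfl⟩
  have hv_le : ∀ i, v i ^ 2 ≤ 1 := fun i =>
    hv ▸ Finset.single_le_sum (fun j _ => sq_nonneg (v j)) (Finset.mem_univ i)
  rw [rayR_diagonal]
  gcongr with i
  calc d i * v i ^ 2 ≤ |d i| * v i ^ 2 := by gcongr; exact le_abs_self _
    _ ≤ |d i| := mul_le_of_le_one_right (abs_nonneg _) (hv_le i)

lemma mul_diagonal_nonneg {B : Matrix (Fin q) (Fin q) ℝ} (hB : ∀ i j, 0 ≤ B i j)
    {c : Fin q → ℝ} (hc : ∀ j, 0 ≤ c j) (i j : Fin q) : 0 ≤ (B * diagonal c) i j := by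
  rw [mul_diagonal]
  exact mul_nonneg (hB i j) (hc j)

lemma mulVec_nonneg {A : Matrix (Fin q) (Fin q) ℝ} (hA : ∀ i j, 0 ≤ A i j) {w : Fin q → ℝ}
    (hw : ∀ j, 0 ≤ w j) (i : Fin q) : 0 ≤ (A *ᵥ w) i :=
  show 0 ≤ ∑ j, A i j * w j from Finset.sum_nonneg fun j _ => mul_nonneg (hA i j) (hw j)

lemma eq_zero_of_nonneg_of_mulVec_eq_zero {A : Matrix (Fin q) (Fin q) ℝ} (hA : ∀ i j, 0 ≤ A i j)
    {b : Fin q → ℝ} (hb : ∀ j, 0 < b j) (hAb : A *ᵥ b = 0) : A = 0 := by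
  ext i j
  have hrow : ∑ l, A i l * b l = 0 := congrFun hAb i
  have hterms := (Finset.sum_eq_zero_iff_of_nonneg fun l _ => mul_nonneg (hA i l) (hb l).le).1
    hrow j (Finset.mem_univ j)
  exact (mul_eq_zero.1 hterms).resolve_right (hb j).ne'

lemma eigenvalue_nonneg_of_pos_eigenvector [NeZero q] {A : Matrix (Fin q) (Fin q) ℝ}
    (hA : ∀ i j, 0 ≤ A i j) {b : Fin q → ℝ} (hb : ∀ j, 0 < b j) {r : ℝ} (hAb : A *ᵥ b = r • b) :
    0 ≤ r := by
  have h := mulVec_nonneg hA (fun j => (hb j).le) 0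
  rw [hAb, Pi.smul_apply, smul_eq_mul] at h
  exact nonneg_of_mul_nonneg_left h (hb 0)

end Matrix

section lamNull

variable {q : ℕ} [NeZero q] {B : Matrix (Fin q) (Fin q) ℝ} {c : Fin q → ℝ}

lemma lamNull_le_of_forall_le (hA : ∀ i j, 0 ≤ (B * diagonal c) i j)
    {v : Fin q → ℝ} (hv : ∀ k, 0 < v k) {t : ℝ}
    (ht : ∀ k, (v k)⁻¹ + ((B * diagonal c) *ᵥ (v - 1)) k ≤ t) : lamNull B c ≤ t := by
  have hbdd : BddBelow {x | ∃ v : Fin q → ℝ, (∀ k, 0 < v k) ∧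
      x = lmaxR (diagonal (fun k => (v k)⁻¹) + diagonal ((B * diagonal c) *ᵥ (v - 1)))} := by
    refine ⟨-((B * diagonal c) *ᵥ 1) 0, ?_⟩
    rintro x ⟨w, hw, rfl⟩
    rw [diagonal_add]
    refine le_trans ?_ (le_lmaxR_diagonal _ 0)
    have hAw := mulVec_nonneg hA (fun j => (hw j).le) 0
    have hw0 := inv_pos.2 (hw 0)
    simp only [mulVec_sub, Pi.sub_apply]
    linarith
  refine (csInf_le hbdd ⟨v, hv, rfl⟩).trans ?_
  rw [diagonal_add]
  exact lmaxR_diagonal_le ht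

lemma lamNull_nonpos_of_mul_diagonal_eq_zero (hA : B * diagonal c = 0) : lamNull B c ≤ 0 := by
  refine le_of_forall_pos_le_add fun ε hε => ?_
  refine lamNull_le_of_forall_le (fun i j => by rw [hA]; rfl) (v := fun _ => ε⁻¹)
    (fun _ => inv_pos.2 hε) fun k => ?_
  simp [hA]

end lamNull

lemma add_mul_one_sub_pos {a s : ℝ} (ha : 0 < a) (hs0 : 0 ≤ s) (hs1 : s ≤ 1) :
    0 < a + s * (1 - a) := by
  rcases le_total a 1 with h | h
  · nlinarith [mul_nonneg hs0 (sub_nonneg.2 h)]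
  · nlinarith [mul_nonneg (sub_nonneg.2 h) (sub_nonneg.2 hs1)]

lemma one_add_div_mul_pos {a s : ℝ} (ha : 0 < a) (hs0 : 0 ≤ s) (hs1 : s ≤ 1) :
    0 < 1 + (1 - a) / a * s := by
  have : 1 + (1 - a) / a * s = (a + s * (1 - a)) / a := by field_simp
  rw [this]
  exact div_pos (add_mul_one_sub_pos ha hs0 hs1) ha

/-- The identity `(a + u)(1 - u) = a + s (1 - s) (1 - a)²` for `u = s (1 - a)` gives
`1 / (1 + x) ≤ 1 - s (1 - a)`, and `a² x = a (1 - a) s` then adds up to the bound. -/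
lemma inv_one_add_add_sq_mul_le {a s : ℝ} (ha : 0 < a) (hs0 : 0 ≤ s) (hs1 : s ≤ 1) :
    (1 + (1 - a) / a * s)⁻¹ + a ^ 2 * ((1 - a) / a * s) ≤ 1 - s * (1 - a) ^ 2 := by
  have hD := add_mul_one_sub_pos ha hs0 hs1
  have hinv : (1 + (1 - a) / a * s)⁻¹ = a / (a + s * (1 - a)) := by field_simp
  have hlin : a ^ 2 * ((1 - a) / a * s) = a * (1 - a) * s := by field_simp
  have hkey : a / (a + s * (1 - a)) ≤ 1 - s * (1 - a) := by
    rw [div_le_iff₀ hD]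
    nlinarith [mul_nonneg (mul_nonneg hs0 (sub_nonneg.2 hs1)) (sq_nonneg (1 - a))]
  rw [hinv, hlin]
  linarith

theorem lamNull_upper_bound_general {q : ℕ} (hq : 0 < q)
    (B : Matrix (Fin q) (Fin q) ℝ) (hBnn : ∀ k l, 0 ≤ B k l)
    (c : Fin q → ℝ) (hc : ∀ k, 0 < c k)
    (lcr : ℝ)
    (b : Fin q → ℝ) (hb : ∀ i, 0 < b i)
    (heig : (B * Matrix.diagonal c).mulVec b = lcr • b) :
    lamNull B c ≤ 1 - ((⨅ i, b i) / (⨆ i, b i)) * (1 - Real.sqrt lcr) ^ 2 := by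
  have : NeZero q := ⟨hq.ne'⟩
  set M := ⨆ i, b i
  have hbM : ∀ k, b k ≤ M := le_ciSup (Finite.bddAbove_range b)
  have hM : 0 < M := (hb 0).trans_le (hbM 0)
  have hmb : ∀ k, (⨅ i, b i) ≤ b k := ciInf_le (Finite.bddBelow_range b)
  have hs0 : ∀ k, 0 ≤ b k / M := fun k => div_nonneg (hb k).le hM.le
  have hs1 : ∀ k, b k / M ≤ 1 := fun k => div_le_one_of_le₀ (hbM k) hM.le
  have hA := mul_diagonal_nonneg hBnn fun j => (hc j).le
  rcases (eigenvalue_nonneg_of_pos_eigenvector hA hb heig).eq_or_lt with rfl | hpos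
  · have hA0 := eq_zero_of_nonneg_of_mulVec_eq_zero hA hb (by rw [heig, zero_smul])
    refine (lamNull_nonpos_of_mul_diagonal_eq_zero hA0).trans ?_
    rw [Real.sqrt_zero, sub_zero, one_pow, mul_one, sub_nonneg]
    exact div_le_one_of_le₀ ((hmb 0).trans (hbM 0)) hM.le
  set a := Real.sqrt lcr
  have ha : 0 < a := Real.sqrt_pos.2 hpos
  set v : Fin q → ℝ := fun k => 1 + (1 - a) / a * (b k / M)
  have hAv : (B * diagonal c) *ᵥ (v - 1) = a ^ 2 • (v - 1) := by
    have hv1 : v - 1 = ((1 - a) / a / M) • b := by ext k; simp [v]; ring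
    rw [hv1, mulVec_smul, heig, Real.sq_sqrt hpos.le, smul_comm]
  refine lamNull_le_of_forall_le hA (v := v)
    (fun k => one_add_div_mul_pos ha (hs0 k) (hs1 k)) fun k => ?_
  calc (v k)⁻¹ + ((B * diagonal c) *ᵥ (v - 1)) k
      = (1 + (1 - a) / a * (b k / M))⁻¹ + a ^ 2 * ((1 - a) / a * (b k / M)) := by
        rw [hAv]; simp [v]
    _ ≤ 1 - b k / M * (1 - a) ^ 2 := inv_one_add_add_sq_mul_le ha (hs0 k) (hs1 k)
    _ ≤ 1 - (⨅ i, b i) / M * (1 - a) ^ 2 := by gcongr; exact hmb k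

/-- Lemma: quantitative bound on λ_∅. -/
theorem lamNull_upper_bound {q : ℕ} (hq : 0 < q)
    (B : Matrix (Fin q) (Fin q) ℝ) (hBsym : B.IsSymm) (hBnn : ∀ k l, 0 ≤ B k l)
    (hirr : IrreducibleMat B)
    (c : Fin q → ℝ) (hc : ∀ k, 0 < c k)
    (lcr : ℝ)
    (hlcr : lcr = lmaxR (Matrix.diagonal (fun k => Real.sqrt (c k)) * B *
      Matrix.diagonal (fun k => Real.sqrt (c k))))
    (b : Fin q → ℝ) (hb : ∀ i, 0 < b i)
    (heig : (B * Matrix.diagonal c).mulVec b = lcr • b) :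
    lamNull B c ≤ 1 - ((⨅ i, b i) / (⨆ i, b i)) * (1 - Real.sqrt lcr) ^ 2 :=
  lamNull_upper_bound_general hq B hBnn c hc lcr b hb heig
end
end

section
/- Let B be a q×q symmetric matrix with strictly positive entries and let c ∈ ℝ^q have strictly positive entries. Suppose a vector v ∈ ℝ^q with strictly positive entries and a real number μ satisfy 1/v + B diag(c)(v − 1_q) = μ · 1_q (where 1/v denotes the entrywise inverse) and λ_max(diag(c)^{1/2} B diag(c)^{1/2} − diag(v)^{-1}) = 0. Then μ = 1. -/
/-!
With `D = diag(√c)` and `M = D B D - diag(v)⁻¹`, `λ_max(M) = 0` makes `-M` positive semidefinite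
and gives a unit vector `u` with `⟨u, M u⟩ = 0`. As the off-diagonal entries of `M` are positive,
`|u|` is such a vector as well, so `M |u| = 0` with `|u| ≥ 0`, `|u| ≠ 0`. The fixed-point equation
says precisely that `M D (v - 1) = (μ - 1) √c`; pairing with `|u|` and using the symmetry of `M`
gives `(μ - 1) ⟨|u|, √c⟩ = 0`, while `⟨|u|, √c⟩ > 0`.
-/

open MeasureTheory ProbabilityTheory Matrix

noncomputable section

section Rayleigh

variable {q : ℕ}

lemma nsqR_eq_dotProduct (x : Fin q → ℝ) : nsqR x = x ⬝ᵥ x := by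
  simp only [nsqR, dotProduct, sq]

lemma nsqR_smul (t : ℝ) (x : Fin q → ℝ) : nsqR (t • x) = t ^ 2 * nsqR x := by
  simp [nsqR, Finset.mul_sum, mul_pow]

lemma nsqR_abs (x : Fin q → ℝ) : nsqR |x| = nsqR x := by
  simp [nsqR, sq_abs]

lemma rayR_smul (M : Matrix (Fin q) (Fin q) ℝ) (t : ℝ) (x : Fin q → ℝ) :
    rayR M (t • x) = t ^ 2 * rayR M x := by
  simp only [rayR, mulVec_smul, smul_dotProduct, dotProduct_smul, smul_eq_mul]
  ring

lemma continuous_rayR (M : Matrix (Fin q) (Fin q) ℝ) : Continuous (rayR M) := by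
  unfold rayR
  simp only [mulVec, dotProduct]
  fun_prop

lemma isCompact_setOf_nsqR_eq_one : IsCompact {x : Fin q → ℝ | nsqR x = 1} := by
  refine Metric.isCompact_of_isClosed_isBounded
    (isClosed_eq (by unfold nsqR; fun_prop) continuous_const)
    ((Metric.isBounded_closedBall (x := 0) (r := 1)).subset fun x hx => ?_)
  rw [Metric.mem_closedBall, dist_zero_right, pi_norm_le_iff_of_nonneg zero_le_one]
  intro i
  have hi : x i ^ 2 ≤ 1 := hx ▸ Finset.single_le_sum (f := fun j => x j ^ 2)
    (fun j _ => sq_nonneg _) (Finset.mem_univ i)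
  rw [Real.norm_eq_abs, ← sq_le_one_iff_abs_le_one]
  exact hi

lemma isCompact_rayR_values (M : Matrix (Fin q) (Fin q) ℝ) :
    IsCompact {x | ∃ v, nsqR v = 1 ∧ x = rayR M v} := by
  have himage : {x | ∃ v, nsqR v = 1 ∧ x = rayR M v} = rayR M '' {v | nsqR v = 1} := by
    ext; simp [eq_comm]
  rw [himage]
  exact isCompact_setOf_nsqR_eq_one.image (continuous_rayR M)

lemma exists_rayR_eq_lmaxR (hq : 0 < q) (M : Matrix (Fin q) (Fin q) ℝ) :
    ∃ u, nsqR u = 1 ∧ rayR M u = lmaxR M := by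
  have hunit : nsqR (Pi.single ⟨0, hq⟩ 1 : Fin q → ℝ) = 1 := by simp [nsqR, Pi.single_apply]
  obtain ⟨u, hu, hmax⟩ := (isCompact_rayR_values M).sSup_mem ⟨_, _, hunit, rfl⟩
  exact ⟨u, hu, hmax.symm⟩

lemma rayR_le_lmaxR (M : Matrix (Fin q) (Fin q) ℝ) {u : Fin q → ℝ} (hu : nsqR u = 1) :
    rayR M u ≤ lmaxR M :=
  le_csSup (isCompact_rayR_values M).bddAbove ⟨u, hu, rfl⟩

lemma rayR_le_lmaxR_mul_nsqR (M : Matrix (Fin q) (Fin q) ℝ) (x : Fin q → ℝ) :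
    rayR M x ≤ lmaxR M * nsqR x := by
  rcases eq_or_ne x 0 with rfl | hx
  · simp [rayR, nsqR]
  have hpos : 0 < nsqR x := by
    rw [nsqR_eq_dotProduct]
    simpa using dotProduct_star_self_pos_iff.mpr hx
  set t := (√(nsqR x))⁻¹
  have ht : t ^ 2 * nsqR x = 1 := by
    rw [inv_pow, Real.sq_sqrt hpos.le, inv_mul_cancel₀ hpos.ne']
  have h := rayR_le_lmaxR M (u := t • x) (by rw [nsqR_smul, ht])
  rw [rayR_smul] at h
  calc rayR M x = t ^ 2 * rayR M x * nsqR x := by rw [mul_right_comm, ht, one_mul]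
    _ ≤ lmaxR M * nsqR x := by gcongr

lemma rayR_le_rayR_abs {M : Matrix (Fin q) (Fin q) ℝ} (hM : ∀ i j, i ≠ j → 0 ≤ M i j)
    (x : Fin q → ℝ) : rayR M x ≤ rayR M |x| := by
  simp only [rayR, dotProduct, mulVec, Finset.mul_sum]
  refine Finset.sum_le_sum fun i _ => Finset.sum_le_sum fun j _ => ?_
  rcases eq_or_ne i j with rfl | hij
  · simp only [Pi.abs_apply]
    exact le_of_eq (by linear_combination M i i * (abs_mul_abs_self (x i)).symm)
  · have : x i * x j ≤ |x i| * |x j| := by rw [← abs_mul]; exact le_abs_self _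
    simp only [Pi.abs_apply]
    nlinarith [hM i j hij]

lemma exists_nonneg_mulVec_eq_zero_of_lmaxR_eq_zero (hq : 0 < q)
    {M : Matrix (Fin q) (Fin q) ℝ} (hMs : M.IsSymm) (hM : ∀ i j, i ≠ j → 0 ≤ M i j)
    (h : lmaxR M = 0) : ∃ u, 0 ≤ u ∧ u ≠ 0 ∧ M *ᵥ u = 0 := by
  obtain ⟨u, hu, hMu⟩ := exists_rayR_eq_lmaxR hq M
  have hpsd : (-M).PosSemidef := by
    refine PosSemidef.of_dotProduct_mulVec_nonneg hMs.neg fun x => ?_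
    have := rayR_le_lmaxR_mul_nsqR M x
    rw [h, zero_mul] at this
    simpa [rayR, neg_mulVec] using this
  have hzero : rayR M |u| = 0 := le_antisymm
    (h ▸ rayR_le_lmaxR M (by rw [nsqR_abs, hu])) (h ▸ hMu ▸ rayR_le_rayR_abs hM u)
  refine ⟨|u|, abs_nonneg u, fun h0 => ?_, ?_⟩
  · rw [← nsqR_abs, h0] at hu
    simp [nsqR] at hu
  · have := (hpsd.dotProduct_mulVec_zero_iff |u|).mp (by simpa [rayR, neg_mulVec] using hzero)
    simpa [neg_mulVec] using this

end Rayleigh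

lemma Matrix.IsSymm.diagonal_mul_mul_diagonal {n α : Type*} [Fintype n] [DecidableEq n]
    [CommSemiring α] {B : Matrix n n α} (hB : B.IsSymm) (d : n → α) :
    (diagonal d * B * diagonal d).IsSymm := by
  rw [IsSymm, transpose_mul, transpose_mul, diagonal_transpose, hB.eq, mul_assoc]

lemma dotProduct_pos_of_nonneg_of_ne_zero {n R : Type*} [Fintype n] [Semiring R] [PartialOrder R]
    [IsStrictOrderedRing R] {u w : n → R} (hu : 0 ≤ u)
    (hu0 : u ≠ 0) (hw : ∀ i, 0 < w i) : 0 < u ⬝ᵥ w := by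
  obtain ⟨i, hi⟩ := Function.ne_iff.mp hu0
  exact Finset.sum_pos' (fun j _ => mul_nonneg (hu j) (hw j).le)
    ⟨i, Finset.mem_univ i, mul_pos (lt_of_le_of_ne (hu i) (Ne.symm hi)) (hw i)⟩

lemma mulVec_diagonal_sqrt_mulVec_sub_one {q : ℕ} {B : Matrix (Fin q) (Fin q) ℝ}
    {c v : Fin q → ℝ} {μ : ℝ} (hc : ∀ k, 0 ≤ c k) (hv : ∀ k, v k ≠ 0)
    (heq : v⁻¹ + (B * diagonal c) *ᵥ (v - 1) = fun _ => μ) :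
    (diagonal (fun k => √(c k)) * B * diagonal (fun k => √(c k)) - diagonal fun k => (v k)⁻¹) *ᵥ
      (diagonal (fun k => √(c k)) *ᵥ (v - 1)) = (μ - 1) • fun k => √(c k) := by
  have hDD : diagonal (fun k => √(c k)) * diagonal (fun k => √(c k)) = diagonal c := by
    rw [diagonal_mul_diagonal]
    exact congrArg diagonal (funext fun k => Real.mul_self_sqrt (hc k))
  have hBc : (B * diagonal c) *ᵥ (v - 1) = fun k => μ - (v k)⁻¹ := by
    ext k
    simp [← congrFun heq k]
  ext k
  rw [sub_mulVec, mulVec_mulVec, mul_assoc, mul_assoc, hDD, ← mulVec_mulVec, hBc]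
  simp only [Pi.sub_apply, mulVec_diagonal, Pi.smul_apply, smul_eq_mul, Pi.one_apply]
  field_simp [hv k]
  ring

/-- Lemma: the "magic" identity forcing μ = 1. -/
theorem magic_mu_eq_one {q : ℕ} (hq : 0 < q)
    (B : Matrix (Fin q) (Fin q) ℝ) (hBsym : B.IsSymm) (hBpos : ∀ k l, 0 < B k l)
    (c : Fin q → ℝ) (hc : ∀ k, 0 < c k)
    (v : Fin q → ℝ) (hv : ∀ k, 0 < v k) (μ : ℝ)
    (heq : v⁻¹ + (B * Matrix.diagonal c).mulVec (v - 1) = fun _ => μ)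
    (hzero : lmaxR (Matrix.diagonal (fun k => Real.sqrt (c k)) * B *
        Matrix.diagonal (fun k => Real.sqrt (c k)) -
      Matrix.diagonal (fun k => (v k)⁻¹)) = 0) :
    μ = 1 := by
  set D := diagonal fun k => √(c k)
  set M := D * B * D - diagonal fun k => (v k)⁻¹
  have hMs : M.IsSymm := (hBsym.diagonal_mul_mul_diagonal _).sub (isSymm_diagonal _)
  have hMoff : ∀ i j, i ≠ j → 0 ≤ M i j := fun i j hij => by
    simp only [M, D, Matrix.sub_apply, mul_diagonal, diagonal_mul, diagonal_apply_ne _ hij,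
      sub_zero]
    exact (mul_pos (mul_pos (Real.sqrt_pos.mpr (hc i)) (hBpos i j)) (Real.sqrt_pos.mpr (hc j))).le
  obtain ⟨u, hu0, hu, hMu⟩ := exists_nonneg_mulVec_eq_zero_of_lmaxR_eq_zero hq hMs hMoff hzero
  have hprod : (μ - 1) * (u ⬝ᵥ fun k => √(c k)) = 0 := calc
    _ = u ⬝ᵥ M *ᵥ (D *ᵥ (v - 1)) := by
      rw [mulVec_diagonal_sqrt_mulVec_sub_one (fun k => (hc k).le) (fun k => (hv k).ne') heq,
        dotProduct_smul, smul_eq_mul]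
    _ = (M *ᵥ u) ⬝ᵥ (D *ᵥ (v - 1)) := by
      rw [dotProduct_mulVec, ← mulVec_transpose, hMs.eq]
    _ = 0 := by rw [hMu, zero_dotProduct]
  have hpos := dotProduct_pos_of_nonneg_of_ne_zero hu0 hu fun k => Real.sqrt_pos.mpr (hc k)
  linarith [(mul_eq_zero.mp hprod).resolve_right hpos.ne']
end
end

section
/- For every d ≥ 1, every unit vector v ∈ ℝ^d, and every ε > 0, there exists a probability measure μ on {−1,+1}^d under which the d coordinates are independent (μ depends only on d, v and ε), such that for every x ∈ {−1,+1}^d with (1/d)|⟨x, v⟩|² ≥ ε one has μ({x̂ ∈ {−1,+1}^d : (1/d)|⟨x, x̂⟩| ≥ ε/8}) ≥ 1 − 64/(d ε²). -/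
/-!
Round each coordinate independently to `±1` with mean `w i`, where `w` is `c • v` clipped to
`[-1, 1]` and `c = √(dε)/2`. Since `|t - clip t| ≤ t²`, clipping moves `⟨x, c • v⟩` by at most
`c² ‖v‖² = dε/4`, so the mean `⟨x, w⟩` of `⟨x, ŷ⟩` has absolute value at least
`c √(dε) - dε/4 = dε/4`. Its variance is at most `d`, so by Chebyshev `⟨x, ŷ⟩` deviates from
its mean by `dε/8` with probability at most `d / (dε/8)² = 64/(dε²)`.
-/

open MeasureTheory ProbabilityTheory Set

noncomputable section

def clampUnit (t : ℝ) : Icc (-1 : ℝ) 1 := projIcc (-1) 1 (by norm_num) t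

lemma abs_sub_clampUnit_le_sq (t : ℝ) : |t - clampUnit t| ≤ t ^ 2 := by
  simp only [clampUnit, coe_projIcc]
  rcases le_total t (-1) with h | h
  · rw [min_eq_right (by linarith), max_eq_left h, abs_of_nonpos (by linarith)]
    nlinarith
  rcases le_total t 1 with h' | h'
  · rw [min_eq_right h', max_eq_right h, sub_self, abs_zero]
    positivity
  · rw [min_eq_left h', max_eq_right (by norm_num), abs_of_nonneg (by linarith)]
    nlinarith

lemma sub_sum_sq_le_abs_sum_mul_clampUnit {ι : Type*} [Fintype ι] {x : ι → ℝ}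
    (hx : ∀ i, |x i| ≤ 1) (u : ι → ℝ) : |∑ i, x i * u i| - ∑ i, u i ^ 2 ≤ |∑ i, x i * clampUnit (u i)| := by
  have herr : |∑ i, x i * u i - ∑ i, x i * clampUnit (u i)| ≤ ∑ i, u i ^ 2 :=
    calc |∑ i, x i * u i - ∑ i, x i * clampUnit (u i)|
        = |∑ i, x i * (u i - clampUnit (u i))| := by
          simp only [mul_sub, Finset.sum_sub_distrib]
      _ ≤ ∑ i, |x i| * |u i - clampUnit (u i)| := by
          simpa only [abs_mul] using
            Finset.abs_sum_le_sum_abs (fun i => x i * (u i - clampUnit (u i))) Finset.univ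
      _ ≤ ∑ i, u i ^ 2 := Finset.sum_le_sum fun i _ =>
          (mul_le_of_le_one_left (abs_nonneg _) (hx i)).trans (abs_sub_clampUnit_le_sq _)
  linarith [abs_sub_abs_le_abs_sub (∑ i, x i * u i) (∑ i, x i * clampUnit (u i))]

lemma le_abs_sum_mul_clampUnit {ι : Type*} [Fintype ι] {x v : ι → ℝ} (hx : ∀ i, |x i| ≤ 1)
    (hv : ∑ i, v i ^ 2 = 1) {a : ℝ} (ha : 0 ≤ a) (hxv : a ≤ (∑ i, x i * v i) ^ 2) :
    a / 4 ≤ |∑ i, x i * clampUnit (√a / 2 * v i)| := by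
  have hcorr : √a ≤ |∑ i, x i * v i| := by
    simpa only [Real.sqrt_sq_eq_abs] using Real.sqrt_le_sqrt hxv
  have hlin : |∑ i, x i * (√a / 2 * v i)| = √a / 2 * |∑ i, x i * v i| := by
    simp only [mul_left_comm (x _), ← Finset.mul_sum, abs_mul,
      abs_of_nonneg (by positivity : 0 ≤ √a / 2)]
  have hsq : ∑ i, (√a / 2 * v i) ^ 2 = a / 4 := by
    simp only [mul_pow, ← Finset.mul_sum, hv, div_pow, Real.sq_sqrt ha]
    ring
  have hmain := sub_sum_sq_le_abs_sum_mul_clampUnit hx (fun i => √a / 2 * v i)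
  rw [hlin, hsq] at hmain
  have : √a / 2 * √a = a / 2 := by rw [mul_comm, ← mul_div_assoc, Real.mul_self_sqrt ha]
  nlinarith [Real.sqrt_nonneg a]

def signMeasure (m : Icc (-1 : ℝ) 1) : Measure ℝ :=
  ENNReal.ofReal ((1 + m) / 2) • Measure.dirac 1 + ENNReal.ofReal ((1 - m) / 2) • Measure.dirac (-1)

section signMeasure

variable (m : Icc (-1 : ℝ) 1)

instance isProbabilityMeasure_signMeasure : IsProbabilityMeasure (signMeasure m) := by
  constructor
  have h1 : 0 ≤ (1 + (m : ℝ)) / 2 := by linarith [m.2.1]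
  have h2 : 0 ≤ (1 - (m : ℝ)) / 2 := by linarith [m.2.2]
  simp only [signMeasure, Measure.add_apply, Measure.smul_apply, measure_univ, smul_eq_mul,
    mul_one, ← ENNReal.ofReal_add h1 h2]
  rw [← ENNReal.ofReal_one]
  congr 1
  ring

lemma ae_signMeasure : ∀ᵐ t ∂signMeasure m, t = 1 ∨ t = -1 := by
  refine ae_add_measure_iff.2 ⟨Measure.ae_smul_measure ?_ _, Measure.ae_smul_measure ?_ _⟩ <;>
    simp [ae_dirac_eq]

lemma integral_id_signMeasure : ∫ t, t ∂signMeasure m = m := by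
  rw [signMeasure, integral_add_measure, integral_smul_measure, integral_smul_measure,
    integral_dirac, integral_dirac, ENNReal.toReal_ofReal (by linarith [m.2.1]),
    ENNReal.toReal_ofReal (by linarith [m.2.2])]
  · simp only [smul_eq_mul]; ring
  all_goals exact (integrable_dirac (by simp)).smul_measure ENNReal.ofReal_ne_top

end signMeasure

abbrev signPi {ι : Type*} [Fintype ι] (w : ι → Icc (-1 : ℝ) 1) : Measure (ι → ℝ) :=
  Measure.pi fun i => signMeasure (w i)

section signPi

variable {ι : Type*} [Fintype ι] (w : ι → Icc (-1 : ℝ) 1)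

lemma iIndepFun_signPi : iIndepFun (fun i (y : ι → ℝ) => y i) (signPi w) :=
  iIndepFun_pi fun _ => aemeasurable_id

lemma ae_signPi : ∀ᵐ y ∂signPi w, ∀ i, y i = 1 ∨ y i = -1 :=
  ae_all_iff.2 fun i =>
    (measurePreserving_eval (fun i => signMeasure (w i)) i).quasiMeasurePreserving.ae
      (ae_signMeasure (w i))

lemma signPi_setOf_signs : signPi w {y | ∀ i, y i = 1 ∨ y i = -1} = 1 := by
  have hmeas : MeasurableSet {y : ι → ℝ | ∀ i, y i = 1 ∨ y i = -1} := by
    measurability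
  rw [← measure_univ (μ := signPi w)]
  exact (ae_iff_measure_eq hmeas.nullMeasurableSet).1 (ae_signPi w)

lemma integral_eval_signPi (i : ι) : ∫ y, y i ∂signPi w = w i := by
  rw [integral_comp_eval (μ := fun i => signMeasure (w i)) (f := fun t => t)
    aestronglyMeasurable_id]
  exact integral_id_signMeasure (w i)

theorem signPi_meas_ge_le_card_div_sq (x : ι → ℝ) (hx : ∀ i, |x i| ≤ 1) {r : ℝ} (hr : 0 < r) :
    signPi w {y | r ≤ |∑ i, x i * y i - ∑ i, x i * w i|} ≤
      ENNReal.ofReal (Fintype.card ι / r ^ 2) := by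
  set X : ι → (ι → ℝ) → ℝ := fun i y => x i * y i with hXdef
  have hX : ∀ i, ∀ᵐ y ∂signPi w, X i y ∈ Icc (-1) 1 := fun i =>
    (ae_signPi w).mono fun y hy => by
      have := abs_le.1 (hx i)
      rcases hy i with h | h <;> simp only [hXdef, h, mul_one, mul_neg_one, mem_Icc] <;>
        constructor <;> linarith
  have hmeas : ∀ i, Measurable (X i) := fun i => by fun_prop
  have hL2 : ∀ i, MemLp (X i) 2 (signPi w) := fun i =>
    memLp_of_bounded (hX i) (hmeas i).aestronglyMeasurable 2
  have hindep : Set.Pairwise (Finset.univ : Finset ι) fun i j => X i ⟂ᵢ[signPi w] X j :=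
    fun i _ j _ hij => ((iIndepFun_signPi w).indepFun hij).comp
      (measurable_const_mul (x i)) (measurable_const_mul (x j))
  have hvar : Var[∑ i, X i; signPi w] ≤ Fintype.card ι := by
    rw [IndepFun.variance_sum (fun i _ => hL2 i) hindep]
    calc ∑ i, Var[X i; signPi w] ≤ ∑ _i : ι, ((1 - (-1)) / 2 : ℝ) ^ 2 :=
          Finset.sum_le_sum fun i _ => variance_le_sq_of_bounded (hX i) (hmeas i).aemeasurable
      _ = Fintype.card ι := by norm_num
  have hmean : (signPi w)[∑ i, X i] = ∑ i, x i * w i := by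
    simp only [Finset.sum_apply]
    rw [integral_finsetSum _ fun i _ => (hL2 i).integrable one_le_two]
    exact Finset.sum_congr rfl fun i _ => by rw [integral_const_mul, integral_eval_signPi]
  have hcheb := meas_ge_le_variance_div_sq (memLp_finsetSum' Finset.univ fun i _ => hL2 i) hr
  rw [hmean] at hcheb
  simpa only [Finset.sum_apply, hXdef] using
    hcheb.trans (ENNReal.ofReal_le_ofReal (div_le_div_of_nonneg_right hvar (sq_nonneg r)))

end signPi

/-- Lemma: randomized rounding of a unit vector to a sign vector.
For every d ≥ 1, unit vector v ∈ ℝ^d and ε > 0, there is a probability measure on sign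
vectors with independent coordinates such that every sign vector x with
(1/d)|⟨x,v⟩|² ≥ ε is recovered with probability at least 1 - 64/(d ε²) up to correlation
ε/8. -/
theorem randomized_rounding (d : ℕ) (hd : 1 ≤ d) (v : Fin d → ℝ)
    (hv : ∑ i, v i ^ 2 = 1) (ε : ℝ) (hε : 0 < ε) :
    ∃ μ : Measure (Fin d → ℝ), IsProbabilityMeasure μ ∧
      μ {y | ∀ i, y i = 1 ∨ y i = -1} = 1 ∧
      iIndepFun (fun (i : Fin d) (y : Fin d → ℝ) => y i) μ ∧
      ∀ x : Fin d → ℝ, (∀ i, x i = 1 ∨ x i = -1) →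
        ε ≤ (1 / d) * |∑ i, x i * v i| ^ 2 →
        ENNReal.ofReal (1 - 64 / (d * ε ^ 2)) ≤
          μ {y | ε / 8 ≤ (1 / d) * |∑ i, x i * y i|} := by
  have hd_pos : (0 : ℝ) < d := by exact_mod_cast hd
  set w : Fin d → Icc (-1 : ℝ) 1 := fun i => clampUnit (√(d * ε) / 2 * v i)
  refine ⟨signPi w, inferInstance, signPi_setOf_signs w, iIndepFun_signPi w,
    fun x hx hcorr => ?_⟩
  have hx_abs : ∀ i, |x i| ≤ 1 := fun i => by rcases hx i with h | h <;> simp [h]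
  have hmean : d * ε / 4 ≤ |∑ i, x i * w i| := by
    refine le_abs_sum_mul_clampUnit hx_abs hv (by positivity) ?_
    rw [← sq_abs]
    calc (d : ℝ) * ε ≤ d * ((1 / d) * |∑ i, x i * v i| ^ 2) := by gcongr
      _ = |∑ i, x i * v i| ^ 2 := by field_simp
  have hdev := signPi_meas_ge_le_card_div_sq w x hx_abs (r := d * ε / 8) (by positivity)
  have hclose : ∀ y : Fin d → ℝ, |∑ i, x i * y i - ∑ i, x i * w i| < d * ε / 8 →
      ε / 8 ≤ (1 / d) * |∑ i, x i * y i| := fun y hy => by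
    have := abs_sub_abs_le_abs_sub (∑ i, x i * w i) (∑ i, x i * y i)
    rw [abs_sub_comm] at this
    rw [one_div_mul_eq_div, le_div_iff₀ hd_pos]
    linarith
  calc ENNReal.ofReal (1 - 64 / (d * ε ^ 2))
      = 1 - ENNReal.ofReal (Fintype.card (Fin d) / (d * ε / 8) ^ 2) := by
        rw [ENNReal.ofReal_sub _ (by positivity), ENNReal.ofReal_one, Fintype.card_fin]
        congr 2
        field_simp
        ring
    _ ≤ 1 - signPi w {y | d * ε / 8 ≤ |∑ i, x i * y i - ∑ i, x i * w i|} :=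
        tsub_le_tsub_left hdev 1
    _ ≤ signPi w {y | ε / 8 ≤ (1 / d) * |∑ i, x i * y i|} := by
      rw [tsub_le_iff_left, ← measure_univ (μ := signPi w)]
      exact (measure_mono fun y _ => (le_or_gt _ _).imp id (hclose y)).trans
        (measure_union_le _ _)
end
end
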